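/- arXiv:2302.13014 — 2 statements merged into one kernel-verified Lean document; each statement's English description precedes it below -/
import Mathlib

section
/- Let n ≥ 5 and let W_n be the wheel graph on n vertices. Then T_2(W_n) = 2 and B_2(W_n) = 1; that is, the minimum number of tile types over all pots P with W_n ∈ C(P) and m_P = n is 2, and the minimum number of bond-edge types over such pots is 1. -/
/-!
Basic framework for flexible-tile DNA self-assembly.

Bond-edge types are elements of `Fin m`.  A cohesive end is either unhatted
(`Sum.inl a`) or hatted (`Sum.inr a`).  A tile is a finite multiset of cohesive
ends, and a pot is a finite set of tiles.
-/

/-- A tile over the bond-edge alphabet `Fin m`. -/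
abbrev Tile (m : ℕ) : Type := Multiset (Fin m ⊕ Fin m)

/-- A pot: a finite set of tiles over the alphabet `Fin m`. -/
abbrev Pot (m : ℕ) : Type := Finset (Tile m)

/-- A finite multigraph (nonempty finite vertex set, finite edge set; loops and
parallel edges allowed), edges recorded by their unordered pair of endpoints. -/
structure Multigraph where
  V : Type
  E : Type
  [fintypeV : Fintype V]
  [decEqV : DecidableEq V]
  [nonemptyV : Nonempty V]
  [fintypeE : Fintype E]
  ends : E → Sym2 V

attribute [instance] Multigraph.fintypeV Multigraph.decEqV
  Multigraph.nonemptyV Multigraph.fintypeE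

/-- The order (number of vertices) of a multigraph. -/
def Multigraph.order (G : Multigraph) : ℕ := Fintype.card G.V

/-- An assembly of `G` from tiles over `Fin m`: each edge gets an orientation
(an ordered pair of vertices compatible with its endpoints) and a bond-edge type. -/
structure Assembly (m : ℕ) (G : Multigraph) where
  orient : G.E → G.V × G.V
  label : G.E → Fin m
  orient_ends : ∀ e : G.E, G.ends e = s((orient e).1, (orient e).2)

/-- The tile of a vertex `v` under an assembly: one unhatted `a` for each edge
labeled `a` oriented out of `v`, one hatted `a` for each edge labeled `a`
oriented into `v`. -/
def Assembly.tileOf {m : ℕ} {G : Multigraph} (A : Assembly m G) (v : G.V) : Tile m :=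
  (Finset.univ : Finset G.E).val.bind fun e =>
    (if (A.orient e).1 = v then {Sum.inl (A.label e)} else 0) +
    (if (A.orient e).2 = v then {Sum.inr (A.label e)} else 0)

/-- `G` is realized by the pot `P`: there is an assembly of `G` all of whose
vertex tiles belong to `P`. -/
def Realizes {m : ℕ} (P : Pot m) (G : Multigraph) : Prop :=
  ∃ A : Assembly m G, ∀ v : G.V, A.tileOf v ∈ P

/-- `C(P)`: the class of multigraphs realized by `P`. -/
def CSet {m : ℕ} (P : Pot m) : Set Multigraph := {G | Realizes P G}

/-- `m_P`: the minimum order of a multigraph realized by `P`. -/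
noncomputable def mP {m : ℕ} (P : Pot m) : ℕ :=
  sInf {n | ∃ G ∈ CSet P, G.order = n}

/-- `C_min(P)`: the multigraphs realized by `P` of minimum order. -/
def Cmin {m : ℕ} (P : Pot m) : Set Multigraph :=
  {G ∈ CSet P | G.order = mP P}

/-- An isomorphism of multigraphs. -/
structure MultigraphIso (G H : Multigraph) where
  vEquiv : G.V ≃ H.V
  eEquiv : G.E ≃ H.E
  ends_eq : ∀ e : G.E, H.ends (eEquiv e) = (G.ends e).map vEquiv

/-- Two multigraphs are isomorphic. -/
def Isomorphic (G H : Multigraph) : Prop := Nonempty (MultigraphIso G H)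

/-- Scenario 1: minimum number of tile types over all pots realizing `G`. -/
noncomputable def T1 (G : Multigraph) : ℕ :=
  sInf {c | ∃ m : ℕ, ∃ P : Pot m, Realizes P G ∧ P.card = c}

/-- Scenario 1: minimum number of bond-edge types over all pots realizing `G`. -/
noncomputable def B1 (G : Multigraph) : ℕ :=
  sInf {m | ∃ P : Pot m, Realizes P G}

/-- Scenario 2: minimum number of tile types over pots `P` with `G ∈ C(P)` and
`m_P = |V(G)|`. -/
noncomputable def T2 (G : Multigraph) : ℕ :=
  sInf {c | ∃ m : ℕ, ∃ P : Pot m, Realizes P G ∧ mP P = G.order ∧ P.card = c}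

/-- Scenario 2: minimum number of bond-edge types over pots `P` with `G ∈ C(P)`
and `m_P = |V(G)|`. -/
noncomputable def B2 (G : Multigraph) : ℕ :=
  sInf {m | ∃ P : Pot m, Realizes P G ∧ mP P = G.order}

/-- Scenario 3: minimum number of tile types over pots `P` with `C_min(P)`
consisting exactly of the multigraphs isomorphic to `G`. -/
noncomputable def T3 (G : Multigraph) : ℕ :=
  sInf {c | ∃ m : ℕ, ∃ P : Pot m, Cmin P = {H | Isomorphic H G} ∧ P.card = c}

/-- Scenario 3: minimum number of bond-edge types over pots `P` with `C_min(P)`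
consisting exactly of the multigraphs isomorphic to `G`. -/
noncomputable def B3 (G : Multigraph) : ℕ :=
  sInf {m | ∃ P : Pot m, Cmin P = {H | Isomorphic H G}}

/-- The degree of a vertex (a loop contributes 2). -/
def Multigraph.degree (G : Multigraph) (v : G.V) : ℕ :=
  ∑ e : G.E, (if v ∈ G.ends e then (if (G.ends e).IsDiag then 2 else 1) else 0)

/-- `av(G)`: the number of distinct vertex degrees in `G`. -/
def av (G : Multigraph) : ℕ := (Finset.univ.image G.degree).card

/-- `ev(G)`: the number of distinct even vertex degrees in `G`. -/
def ev (G : Multigraph) : ℕ :=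
  ((Finset.univ.image G.degree).filter (fun d => Even d)).card

/-- `ov(G)`: the number of distinct odd vertex degrees in `G`. -/
def ov (G : Multigraph) : ℕ :=
  ((Finset.univ.image G.degree).filter (fun d => Odd d)).card

/-- `z i t`: the net number of cohesive ends of type `i` on tile `t`
(unhatted count minus hatted count). -/
def zval {m : ℕ} (i : Fin m) (t : Tile m) : ℤ :=
  (t.count (Sum.inl i) : ℤ) - (t.count (Sum.inr i) : ℤ)

/-- The wheel graph on `n` vertices: the hub is `none`; the outer-cycle
vertices are `some i` for `i : Fin (n-1)`.  Edge `Sum.inl i` is the spoke from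
the hub to `some i`; edge `Sum.inr i` is the outer-cycle edge from `some i` to
`some ((i+1) mod (n-1))`. -/
def wheel (n : ℕ) : Multigraph where
  V := Option (Fin (n - 1))
  E := Fin (n - 1) ⊕ Fin (n - 1)
  ends e :=
    match e with
    | Sum.inl i => s((none : Option (Fin (n - 1))), some i)
    | Sum.inr i => s(some i,
        some ⟨(i.val + 1) % (n - 1), Nat.mod_lt _ (by have := i.isLt; omega)⟩)

/-- The cycle graph on `n` vertices (vertices `none, some 0, …, some (n-2)`,
edge `k` joining the `k`-th and `(k+1 mod n)`-th vertices in this order). -/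
def cycleVtx (n : ℕ) (k : Fin n) : Option (Fin (n - 1)) :=
  if h : k.val = 0 then none else some ⟨k.val - 1, by have := k.isLt; omega⟩

def cycleGraph (n : ℕ) : Multigraph where
  V := Option (Fin (n - 1))
  E := Fin n
  ends k := s(cycleVtx n k,
    cycleVtx n ⟨(k.val + 1) % n, Nat.mod_lt _ (by have := k.isLt; omega)⟩)

/-!
A tile has as many cohesive ends as its vertex has edges, so the hub (degree `n - 1 ≥ 4`) and a
rim vertex (degree `3`) need different tiles, and any edge needs a bond-edge type. Conversely,
with one type `a`, the pot `{a^(n-1), a â â}` realizes `W_n`: spokes point out of the hub and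
the rim is oriented cyclically. In any graph realized by this pot the net count of `a` over all
vertices vanishes, so `s` hub tiles force `(n - 1) s` rim tiles and the order is a positive
multiple of `n`; hence `m_P = n`.
-/

open Finset

namespace Assembly

variable {m : ℕ} {G : Multigraph} (A : Assembly m G)

lemma count_inl_tileOf (v : G.V) (i : Fin m) :
    (A.tileOf v).count (Sum.inl i) = #{e | (A.orient e).1 = v ∧ A.label e = i} := by
  rw [tileOf, Multiset.count_bind, card_filter, Finset.sum]
  refine congrArg Multiset.sum (Multiset.map_congr rfl fun e _ => ?_)
  split_ifs <;> simp_all [eq_comm]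

lemma count_inr_tileOf (v : G.V) (i : Fin m) :
    (A.tileOf v).count (Sum.inr i) = #{e | (A.orient e).2 = v ∧ A.label e = i} := by
  rw [tileOf, Multiset.count_bind, card_filter, Finset.sum]
  refine congrArg Multiset.sum (Multiset.map_congr rfl fun e _ => ?_)
  split_ifs <;> simp_all [eq_comm]

lemma card_tileOf (v : G.V) : Multiset.card (A.tileOf v) = G.degree v := by
  rw [tileOf, Multiset.card_bind, Multigraph.degree, Finset.sum]
  refine congrArg Multiset.sum (Multiset.map_congr rfl fun e _ => ?_)
  simp only [A.orient_ends e, Sym2.mem_iff, Sym2.mk_isDiag_iff, Function.comp_apply]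
  obtain ⟨a, b⟩ := A.orient e
  by_cases ha : a = v <;> by_cases hb : b = v <;> simp_all [eq_comm]

/-- Each edge contributes one unhatted and one hatted end of its type. -/
lemma sum_zval_tileOf (i : Fin m) : ∑ v, zval i (A.tileOf v) = 0 := by
  have fiberwise (f : G.E → G.V) :
      ∑ v, #{e | f e = v ∧ A.label e = i} = #{e | A.label e = i} := by
    rw [card_eq_sum_card_fiberwise (f := f) (t := univ) fun _ _ => mem_univ _]
    simp only [filter_filter, and_comm]
  simp only [zval, count_inl_tileOf, count_inr_tileOf, sum_sub_distrib]
  push_cast [← Nat.cast_sum]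
  rw [fiberwise, fiberwise, sub_self]

end Assembly

namespace Realizes

variable {m : ℕ} {P : Pot m} {G : Multigraph}

lemma pos_of_edge (hP : Realizes P G) (e : G.E) : 0 < m := by
  obtain ⟨A, -⟩ := hP
  exact Fin.pos (A.label e)

lemma av_le_card (hP : Realizes P G) : av G ≤ #P := by
  obtain ⟨A, hA⟩ := hP
  have hsub : univ.image G.degree ⊆ P.image Multiset.card := by
    intro d hd
    obtain ⟨v, -, rfl⟩ := mem_image.mp hd
    exact mem_image.mpr ⟨A.tileOf v, hA v, A.card_tileOf v⟩
  exact (card_le_card hsub).trans card_image_le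

lemma succ_le_order {k : ℕ} (i : Fin m) (hP : Realizes P G)
    (hz : ∀ t ∈ P, zval i t = k ∨ zval i t = -1) : k + 1 ≤ G.order := by
  obtain ⟨A, hA⟩ := hP
  set S : Finset G.V := {v | zval i (A.tileOf v) = k}
  set T : Finset G.V := {v | ¬zval i (A.tileOf v) = k}
  have hzT : ∀ v ∈ T, zval i (A.tileOf v) = -1 := fun v hv =>
    (hz _ (hA v)).resolve_left (mem_filter.mp hv).2
  have hbalance : (#S : ℤ) * k - #T = 0 := by
    rw [← A.sum_zval_tileOf i,
      ← sum_filter_add_sum_filter_not univ (fun v => zval i (A.tileOf v) = k),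
      sum_congr rfl fun v hv => (mem_filter.mp hv).2, sum_congr rfl hzT]
    simp [S, T, mul_comm, sub_eq_add_neg]
  have horder : #S + #T = G.order := by
    rw [card_filter_add_card_filter_not, card_univ, Multigraph.order]
  have hT : #T = #S * k := by lia
  have hmul : G.order = #S * (k + 1) := by rw [← horder, hT]; ring
  have hpos : 0 < #S * (k + 1) := hmul ▸ Fintype.card_pos
  exact hmul ▸ Nat.le_mul_of_pos_left _ (Nat.pos_of_mul_pos_right hpos)

lemma mP_eq_order (hG : Realizes P G) (hmin : ∀ H, Realizes P H → G.order ≤ H.order) :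
    mP P = G.order :=
  le_antisymm (Nat.sInf_le ⟨G, hG, rfl⟩)
    (le_csInf ⟨_, G, hG, rfl⟩ fun _ ⟨H, hH, hHk⟩ => hHk ▸ hmin H hH)

end Realizes

section Wheel

variable (n : ℕ)

lemma wheel_ends_inr (i : Fin (n - 1)) :
    (wheel n).ends (Sum.inr i) = s(some i, some (finRotate _ i)) := by
  simp [wheel, finRotate_apply, Fin.ext_iff, Fin.val_add]

lemma wheel_order (hn : 1 ≤ n) : (wheel n).order = n :=
  Fintype.card_option.trans (by rw [Fintype.card_fin]; omega)

lemma sum_wheel_edges {M : Type*} [AddCommMonoid M] (f : (wheel n).E → M) :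
    ∑ e, f e = ∑ i, f (.inl i) + ∑ i, f (.inr i) :=
  Fintype.sum_sum_type f

def wheelAssembly : Assembly 1 (wheel n) where
  orient := Sum.elim (fun i => (none, some i)) (fun i => (some i, some (finRotate _ i)))
  label _ := 0
  orient_ends
    | .inl _ => rfl
    | .inr i => wheel_ends_inr n i

def hubTile : Tile 1 := Multiset.replicate (n - 1) (Sum.inl 0)

def rimTile : Tile 1 := {Sum.inl 0, Sum.inr 0, Sum.inr 0}

def wheelPot : Pot 1 := {hubTile n, rimTile}

lemma wheelAssembly_tileOf_none : (wheelAssembly n).tileOf none = hubTile n := by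
  ext ((a | a)) <;> rw [Subsingleton.elim a 0]
  · rw [Assembly.count_inl_tileOf (wheelAssembly n) none 0, card_filter, sum_wheel_edges]
    dsimp only [wheel, wheelAssembly, Sum.elim_inl, Sum.elim_inr]
    simp [hubTile]
  · rw [Assembly.count_inr_tileOf (wheelAssembly n) none 0, card_filter, sum_wheel_edges]
    dsimp only [wheel, wheelAssembly, Sum.elim_inl, Sum.elim_inr]
    simp [hubTile, Multiset.count_replicate]

lemma wheelAssembly_tileOf_some (j : Fin (n - 1)) :
    (wheelAssembly n).tileOf (some j) = rimTile := by
  ext ((a | a)) <;> rw [Subsingleton.elim a 0]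
  · rw [Assembly.count_inl_tileOf (wheelAssembly n) (some j) 0, card_filter, sum_wheel_edges]
    dsimp only [wheel, wheelAssembly, Sum.elim_inl, Sum.elim_inr]
    simp [rimTile]
  · rw [Assembly.count_inr_tileOf (wheelAssembly n) (some j) 0, card_filter, sum_wheel_edges]
    dsimp only [wheel, wheelAssembly, Sum.elim_inl, Sum.elim_inr]
    simp [rimTile, -finRotate_apply, ← Equiv.eq_symm_apply]

lemma realizes_wheelPot : Realizes (wheelPot n) (wheel n) := by
  refine ⟨wheelAssembly n, ?_⟩
  rintro (_ | j)
  · simp [wheelAssembly_tileOf_none, wheelPot]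
  · simp [wheelAssembly_tileOf_some, wheelPot]

lemma zval_hubTile : zval 0 (hubTile n) = (n - 1 : ℕ) := by
  simp [zval, hubTile, Multiset.count_replicate]

lemma zval_rimTile : zval 0 rimTile = -1 := by
  simp [zval, rimTile]

lemma mP_wheelPot (hn : 1 ≤ n) : mP (wheelPot n) = (wheel n).order := by
  refine (realizes_wheelPot n).mP_eq_order fun H hH => ?_
  have hz : ∀ t ∈ wheelPot n, zval 0 t = (n - 1 : ℕ) ∨ zval 0 t = -1 := by
    simp [wheelPot, zval_hubTile, zval_rimTile]
  have horder := hH.succ_le_order 0 hz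
  rw [wheel_order n hn]
  omega

lemma wheel_degree_none : (wheel n).degree none = n - 1 := by
  rw [← (wheelAssembly n).card_tileOf none, wheelAssembly_tileOf_none]
  simp [hubTile]

lemma wheel_degree_some (j : Fin (n - 1)) : (wheel n).degree (some j) = 3 := by
  rw [← (wheelAssembly n).card_tileOf (some j), wheelAssembly_tileOf_some]
  rfl

lemma two_le_av_wheel (hn : 5 ≤ n) : 2 ≤ av (wheel n) := by
  refine one_lt_card.mpr ⟨_, mem_image_of_mem _ (mem_univ none), _,
    mem_image_of_mem _ (mem_univ (some ⟨0, by omega⟩)), ?_⟩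
  rw [wheel_degree_none, wheel_degree_some]
  omega

end Wheel

/-- For `n ≥ 5`, the wheel graph `W_n` satisfies `T₂(W_n) = 2` and `B₂(W_n) = 1`. -/
theorem wheel_scenario2 (n : ℕ) (hn : 5 ≤ n) :
    T2 (wheel n) = 2 ∧ B2 (wheel n) = 1 := by
  have hreal := realizes_wheelPot n
  have hmP := mP_wheelPot n (by omega)
  constructor
  · refine IsLeast.csInf_eq ⟨⟨1, wheelPot n, hreal, hmP, ?_⟩, ?_⟩
    · exact le_antisymm card_le_two ((two_le_av_wheel n hn).trans hreal.av_le_card)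
    · rintro c ⟨m, P, hP, -, rfl⟩
      exact (two_le_av_wheel n hn).trans hP.av_le_card
  · refine IsLeast.csInf_eq ⟨⟨wheelPot n, hreal, hmP⟩, ?_⟩
    rintro m ⟨P, hP, -⟩
    exact hP.pos_of_edge (Sum.inl ⟨0, by omega⟩)
end

section
/- Let G be a finite graph without loops and let P be a pot such that C_min(P) = {G} (up to isomorphism). Then in any assembly of G from P, no tile type of P is used on two adjacent vertices of G. -/
/- If the tiles of the tail `u` and head `v` of an edge `e` coincide, some edge `g` leaves `v` with
the label of `e`. Exchanging the heads of `e` and `g` keeps every vertex tile, hence gives a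
graph realized by `P` on the same vertex set, so in `C_min(P)`; but `g` has become a loop at `v`,
while every graph isomorphic to `G` is loopless. -/

theorem Isomorphic.refl (G : Multigraph) : Isomorphic G G :=
  ⟨⟨Equiv.refl _, Equiv.refl _, fun _ => (congrFun Sym2.map_id _).symm⟩⟩

theorem MultigraphIso.isDiag_ends_iff {G H : Multigraph} (φ : MultigraphIso G H) (e : G.E) :
    (H.ends (φ.eEquiv e)).IsDiag ↔ (G.ends e).IsDiag := by
  rw [φ.ends_eq, Sym2.isDiag_map φ.vEquiv.injective]

theorem not_isDiag_of_realizes_of_order_eq {m : ℕ} {G H : Multigraph}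
    (hloop : ∀ e : G.E, ¬ (G.ends e).IsDiag) {P : Pot m} (hP : Cmin P = {H | Isomorphic H G})
    (hH : Realizes P H) (hord : H.order = G.order) (f : H.E) : ¬ (H.ends f).IsDiag := by
  have hG : G ∈ Cmin P := hP ▸ Isomorphic.refl G
  have hHmin : H ∈ Cmin P := ⟨hH, hord.trans hG.2⟩
  rw [hP] at hHmin
  obtain ⟨φ⟩ := hHmin
  rw [← φ.isDiag_ends_iff]
  exact hloop _

namespace Assembly

variable {m : ℕ} {G : Multigraph}

theorem orient_eq_or_eq_swap (A : Assembly m G) {e : G.E} {u v : G.V}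
    (he : G.ends e = s(u, v)) : A.orient e = (u, v) ∨ A.orient e = (v, u) := by
  have := A.orient_ends e
  rw [he, Sym2.eq_iff] at this
  rcases this with ⟨hu, hv⟩ | ⟨hv, hu⟩
  · exact Or.inl (Prod.ext hu.symm hv.symm)
  · exact Or.inr (Prod.ext hu.symm hv.symm)

theorem tileOf_eq_sum (A : Assembly m G) (v : G.V) :
    A.tileOf v = (∑ e, if (A.orient e).1 = v then {Sum.inl (A.label e)} else 0) +
      ∑ e, if (A.orient e).2 = v then {Sum.inr (A.label e)} else 0 :=
  Finset.sum_add_distrib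

theorem inl_mem_tileOf_iff (A : Assembly m G) (v : G.V) (a : Fin m) :
    Sum.inl a ∈ A.tileOf v ↔ ∃ e, (A.orient e).1 = v ∧ A.label e = a := by
  simp only [tileOf, Multiset.mem_bind, Finset.mem_univ_val, true_and, Multiset.mem_add]
  refine exists_congr fun e => ?_
  split_ifs <;> simp_all [eq_comm]

def permHeads (A : Assembly m G) (σ : Equiv.Perm G.E) : G.E → G.V × G.V :=
  fun f => ((A.orient f).1, (A.orient (σ f)).2)

abbrev permHeadsGraph (A : Assembly m G) (σ : Equiv.Perm G.E) : Multigraph where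
  V := G.V
  E := G.E
  ends f := s((A.permHeads σ f).1, (A.permHeads σ f).2)

def permHeadsAssembly (A : Assembly m G) (σ : Equiv.Perm G.E) :
    Assembly m (A.permHeadsGraph σ) where
  orient := A.permHeads σ
  label := A.label
  orient_ends _ := rfl

theorem tileOf_permHeadsAssembly (A : Assembly m G) {σ : Equiv.Perm G.E}
    (hσ : ∀ f, A.label (σ f) = A.label f) (v : G.V) :
    (A.permHeadsAssembly σ).tileOf v = A.tileOf v := by
  rw [tileOf_eq_sum, tileOf_eq_sum, ← Equiv.sum_comp σ fun e =>
    if (A.orient e).2 = v then {Sum.inr (A.label e)} else 0]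
  simp only [permHeadsAssembly, permHeads, hσ]
  rfl

theorem realizes_permHeadsGraph (A : Assembly m G) {P : Pot m} (hA : ∀ v, A.tileOf v ∈ P)
    {σ : Equiv.Perm G.E} (hσ : ∀ f, A.label (σ f) = A.label f) :
    Realizes P (A.permHeadsGraph σ) :=
  ⟨A.permHeadsAssembly σ, fun v => A.tileOf_permHeadsAssembly hσ v ▸ hA v⟩

theorem exists_permHeadsGraph_loop (A : Assembly m G) {e : G.E} {u v : G.V}
    (he : A.orient e = (u, v)) (htile : A.tileOf u = A.tileOf v) :
    ∃ σ : Equiv.Perm G.E, (∀ f, A.label (σ f) = A.label f) ∧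
      ∃ f, ((A.permHeadsGraph σ).ends f).IsDiag := by
  classical
  have hu : Sum.inl (A.label e) ∈ A.tileOf u := (A.inl_mem_tileOf_iff u _).2 ⟨e, by rw [he], rfl⟩
  obtain ⟨g, hgv, hga⟩ := (A.inl_mem_tileOf_iff v _).1 (htile ▸ hu)
  have hσ : ∀ f, A.label (Equiv.swap e g f) = A.label f := fun f => by
    rcases eq_or_ne f e with rfl | hfe
    · rw [Equiv.swap_apply_left, hga]
    rcases eq_or_ne f g with rfl | hfg
    · rw [Equiv.swap_apply_right, hga]
    · rw [Equiv.swap_apply_of_ne_of_ne hfe hfg]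
  refine ⟨Equiv.swap e g, hσ, g, ?_⟩
  exact Sym2.mk_isDiag_iff.2 (by simp [permHeads, he, hgv])

end Assembly

/-- If `G` is loopless and `C_min(P) = {G}` (up to isomorphism), then in any
assembly of `G` from `P`, no tile type is used on two adjacent vertices. -/
theorem no_adjacent_repeated_tile {m : ℕ} (G : Multigraph)
    (hloop : ∀ e : G.E, ¬ (G.ends e).IsDiag)
    (P : Pot m) (hP : Cmin P = {H | Isomorphic H G})
    (A : Assembly m G) (hA : ∀ v, A.tileOf v ∈ P)
    (u v : G.V) (hadj : ∃ e : G.E, G.ends e = s(u, v)) :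
    A.tileOf u ≠ A.tileOf v := by
  obtain ⟨e, he⟩ := hadj
  suffices key : ∀ {x y : G.V}, A.orient e = (x, y) → A.tileOf x ≠ A.tileOf y by
    rcases A.orient_eq_or_eq_swap he with h | h
    · exact key h
    · exact (key h).symm
  intro x y hexy htile
  obtain ⟨σ, hσ, f, hf⟩ := A.exists_permHeadsGraph_loop hexy htile
  exact not_isDiag_of_realizes_of_order_eq hloop hP (A.realizes_permHeadsGraph hA hσ) rfl f hf
end
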